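/- Under the hypotheses of the previous statement (measurable space (X, 𝒜), probability measures μ_src, μ_tgt, measurable labeling function y, S > 0, feasible class 𝒳 with |f − y| ≤ S and |f − f'| ≤ S pointwise on X for all f, f' ∈ 𝒳, errors ε_src(f) = ∫|f − y| dμ_src and ε_tgt(f) = ∫|f − y| dμ_tgt, induced threshold class 𝒵 and divergence d_𝒵), define λ* = inf_{f' ∈ 𝒳} (ε_tgt(f') + ε_src(f')). Then for every f ∈ 𝒳: ε_tgt(f) ≤ ε_src(f) + S · d_𝒵(μ_src, μ_tgt) + λ*. -/

import Mathlib

open MeasureTheory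

section Aux

variable {X : Type*} [MeasurableSpace X]

private lemma aux_integrable_of_bdd (μ : Measure X) [IsProbabilityMeasure μ]
    {g : X → ℝ} {S : ℝ} (hg : Measurable g) (hb : ∀ x, |g x| ≤ S) :
    Integrable g μ := by
  apply Integrable.mono' (integrable_const S) hg.aestronglyMeasurable
  exact Filter.Eventually.of_forall (fun x => by rw [Real.norm_eq_abs]; exact hb x)

private lemma aux_layer (μ : Measure X) [IsProbabilityMeasure μ] {g : X → ℝ} {S : ℝ}
    (hS : 0 < S) (hg : Measurable g) (hnn : ∀ x, 0 ≤ g x) (hb : ∀ x, g x ≤ S) :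
    ∫ x, g x ∂μ = ∫ t in Set.Ioc 0 S, (μ {a | t < g a}).toReal := by
  have hint : Integrable g μ :=
    aux_integrable_of_bdd μ hg (fun x => by rw [abs_of_nonneg (hnn x)]; exact hb x)
  rw [hint.integral_eq_integral_meas_lt (Filter.Eventually.of_forall hnn)]
  refine setIntegral_eq_of_subset_of_forall_diff_eq_zero measurableSet_Ioi
    Set.Ioc_subset_Ioi_self (fun t ht => ?_)
  have htS : S < t := by
    simp only [Set.mem_diff, Set.mem_Ioi, Set.mem_Ioc, not_and, not_le] at ht
    exact ht.2 ht.1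
  have : {a | t < g a} = ∅ := by
    ext a
    simp only [Set.mem_setOf_eq, Set.mem_empty_iff_false, iff_false, not_lt]
    exact le_of_lt (lt_of_le_of_lt (hb a) htS)
  simp [this]

private lemma aux_meas_antitone (μ : Measure X) [IsProbabilityMeasure μ] (g : X → ℝ) :
    Antitone (fun t => (μ {a | t < g a}).toReal) := by
  intro s t hst
  exact ENNReal.toReal_mono (measure_ne_top μ _)
    (measure_mono (fun a ha => lt_of_le_of_lt hst ha))

private lemma aux_toReal_le_one (μ : Measure X) [IsProbabilityMeasure μ] (s : Set X) :
    (μ s).toReal ≤ 1 := by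
  simpa using ENNReal.toReal_mono ENNReal.one_ne_top (prob_le_one (μ := μ) (s := s))

end Aux

/-- Domain-adaptation bound with the optimal combined error `λ* =
inf_{f' ∈ 𝒳} (ε_tgt(f') + ε_src(f'))`: for every `f ∈ 𝒳`,
`ε_tgt(f) ≤ ε_src(f) + S · d_𝒵(μ_src, μ_tgt) + λ*`. -/
theorem target_error_bound_with_lambda_star {X : Type*} [MeasurableSpace X]
    (μsrc μtgt : Measure X) [IsProbabilityMeasure μsrc] [IsProbabilityMeasure μtgt]
    (y : X → ℝ) (hy : Measurable y)
    (S : ℝ) (hS : 0 < S) (𝒳 : Set (X → ℝ))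
    (hXmeas : ∀ f ∈ 𝒳, Measurable f)
    (hfy : ∀ f ∈ 𝒳, ∀ x, |f x - y x| ≤ S)
    (hff : ∀ f ∈ 𝒳, ∀ f' ∈ 𝒳, ∀ x, |f x - f' x| ≤ S) :
    ∀ f ∈ 𝒳,
      ∫ x, |f x - y x| ∂μtgt ≤
        ∫ x, |f x - y x| ∂μsrc +
        S * (⨆ ζ : {ζ : X → ℝ | ∃ f₁ ∈ 𝒳, ∃ f₂ ∈ 𝒳, ∃ ι ∈ Set.Icc (0 : ℝ) 1,
               ζ = fun x => if S * ι < |f₁ x - f₂ x| then (1 : ℝ) else 0},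
             |∫ x, ζ.1 x ∂μsrc - ∫ x, ζ.1 x ∂μtgt|) +
        ⨅ f' : 𝒳, (∫ x, |f'.1 x - y x| ∂μtgt + ∫ x, |f'.1 x - y x| ∂μsrc) := by
  intro f hf
  set Z : Set (X → ℝ) := {ζ : X → ℝ | ∃ f₁ ∈ 𝒳, ∃ f₂ ∈ 𝒳, ∃ ι ∈ Set.Icc (0 : ℝ) 1,
      ζ = fun x => if S * ι < |f₁ x - f₂ x| then (1 : ℝ) else 0} with hZ
  set D : ℝ := ⨆ ζ : Z, |∫ x, ζ.1 x ∂μsrc - ∫ x, ζ.1 x ∂μtgt| with hD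
  -- every ζ in Z is an indicator; its integral is the measure of a set
  have hzval : ∀ (μ : Measure X) [IsProbabilityMeasure μ], ∀ f₁ ∈ 𝒳, ∀ f₂ ∈ 𝒳, ∀ ι : ℝ,
      ∫ x, (if S * ι < |f₁ x - f₂ x| then (1 : ℝ) else 0) ∂μ
        = (μ {x | S * ι < |f₁ x - f₂ x|}).toReal := by
    intro μ _ f₁ hf₁ f₂ hf₂ ι
    have hmeas : MeasurableSet {x | S * ι < |f₁ x - f₂ x|} :=
      measurableSet_lt measurable_const ((hXmeas f₁ hf₁).sub (hXmeas f₂ hf₂)).abs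
    have : (fun x => (if S * ι < |f₁ x - f₂ x| then (1 : ℝ) else 0))
        = Set.indicator {x | S * ι < |f₁ x - f₂ x|} 1 := by
      ext x
      by_cases h : S * ι < |f₁ x - f₂ x| <;> simp [Set.indicator, h]
    rw [this, integral_indicator_one hmeas]; rfl
  have hbdd : BddAbove (Set.range fun ζ : Z => |∫ x, ζ.1 x ∂μsrc - ∫ x, ζ.1 x ∂μtgt|) := by
    refine ⟨2, ?_⟩
    rintro _ ⟨⟨ζ, f₁, hf₁, f₂, hf₂, ι, hι, rfl⟩, rfl⟩
    simp only
    rw [hzval μsrc f₁ hf₁ f₂ hf₂ ι, hzval μtgt f₁ hf₁ f₂ hf₂ ι]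
    have h1 : (μsrc {x | S * ι < |f₁ x - f₂ x|}).toReal ≤ 1 := aux_toReal_le_one μsrc _
    have h2 : (μtgt {x | S * ι < |f₁ x - f₂ x|}).toReal ≤ 1 := aux_toReal_le_one μtgt _
    have h3 : (0:ℝ) ≤ (μsrc {x | S * ι < |f₁ x - f₂ x|}).toReal := ENNReal.toReal_nonneg
    have h4 : (0:ℝ) ≤ (μtgt {x | S * ι < |f₁ x - f₂ x|}).toReal := ENNReal.toReal_nonneg
    rw [abs_le]; constructor <;> linarith
  -- key comparison of integrals of |f - f'| under the two measures
  have key : ∀ f' ∈ 𝒳,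
      |∫ x, |f x - f' x| ∂μsrc - ∫ x, |f x - f' x| ∂μtgt| ≤ S * D := by
    intro f' hf'
    set g : X → ℝ := fun x => |f x - f' x| with hg
    have hgm : Measurable g := ((hXmeas f hf).sub (hXmeas f' hf')).abs
    have hgnn : ∀ x, 0 ≤ g x := fun x => abs_nonneg _
    have hgb : ∀ x, g x ≤ S := fun x => hff f hf f' hf' x
    rw [aux_layer μsrc hS hgm hgnn hgb, aux_layer μtgt hS hgm hgnn hgb]
    set hs : ℝ → ℝ := fun t => (μsrc {a | t < g a}).toReal with hhs
    set ht : ℝ → ℝ := fun t => (μtgt {a | t < g a}).toReal with hht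
    have hsm : Measurable hs := (aux_meas_antitone μsrc g).measurable
    have htm : Measurable ht := (aux_meas_antitone μtgt g).measurable
    have hIoc : (volume (Set.Ioc (0:ℝ) S)) < ⊤ := measure_Ioc_lt_top
    have hsint : IntegrableOn hs (Set.Ioc 0 S) volume := by
      apply Measure.integrableOn_of_bounded (M := 1) hIoc.ne hsm.aestronglyMeasurable
      refine Filter.Eventually.of_forall (fun t => ?_)
      rw [Real.norm_eq_abs, abs_of_nonneg ENNReal.toReal_nonneg]
      exact aux_toReal_le_one μsrc _
    have htint : IntegrableOn ht (Set.Ioc 0 S) volume := by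
      apply Measure.integrableOn_of_bounded (M := 1) hIoc.ne htm.aestronglyMeasurable
      refine Filter.Eventually.of_forall (fun t => ?_)
      rw [Real.norm_eq_abs, abs_of_nonneg ENNReal.toReal_nonneg]
      exact aux_toReal_le_one μtgt _
    rw [← integral_sub hsint htint]
    have hbound : ∀ t ∈ Set.Ioc (0:ℝ) S, ‖hs t - ht t‖ ≤ D := by
      intro t htmem
      obtain ⟨ht0, htS⟩ := htmem
      set ι : ℝ := t / S with hι
      have hιmem : ι ∈ Set.Icc (0:ℝ) 1 :=
        ⟨le_of_lt (div_pos ht0 hS), (div_le_one hS).mpr htS⟩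
      have hSι : S * ι = t := mul_div_cancel₀ t hS.ne'
      have hmem : (fun x => if S * ι < |f x - f' x| then (1:ℝ) else 0) ∈ Z :=
        ⟨f, hf, f', hf', ι, hιmem, rfl⟩
      have hle := le_ciSup hbdd (⟨_, hmem⟩ : Z)
      simp only at hle
      rw [hzval μsrc f hf f' hf' ι, hzval μtgt f hf f' hf' ι, hSι] at hle
      rw [Real.norm_eq_abs]
      exact hle
    calc ‖∫ t in Set.Ioc (0:ℝ) S, (hs t - ht t)‖
        ≤ D * (volume (Set.Ioc (0:ℝ) S)).toReal :=
          norm_setIntegral_le_of_norm_le_const hIoc hbound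
      _ = S * D := by rw [Real.volume_Ioc]; rw [ENNReal.toReal_ofReal (by linarith)]; ring
  -- integrability facts
  have hint : ∀ f₁ ∈ 𝒳, ∀ (μ : Measure X) [IsProbabilityMeasure μ],
      Integrable (fun x => |f₁ x - y x|) μ := by
    intro f₁ hf₁ μ _
    exact aux_integrable_of_bdd μ ((hXmeas f₁ hf₁).sub hy).abs
      (fun x => by rw [abs_abs]; exact hfy f₁ hf₁ x)
  have hint2 : ∀ f₁ ∈ 𝒳, ∀ f₂ ∈ 𝒳, ∀ (μ : Measure X) [IsProbabilityMeasure μ],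
      Integrable (fun x => |f₁ x - f₂ x|) μ := by
    intro f₁ hf₁ f₂ hf₂ μ _
    exact aux_integrable_of_bdd μ ((hXmeas f₁ hf₁).sub (hXmeas f₂ hf₂)).abs
      (fun x => by rw [abs_abs]; exact hff f₁ hf₁ f₂ hf₂ x)
  -- main per-f' inequality
  have main : ∀ f' : 𝒳,
      ∫ x, |f x - y x| ∂μtgt - (∫ x, |f x - y x| ∂μsrc + S * D)
        ≤ ∫ x, |f'.1 x - y x| ∂μtgt + ∫ x, |f'.1 x - y x| ∂μsrc := by
    rintro ⟨f', hf'⟩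
    simp only
    have tri1 : ∫ x, |f x - y x| ∂μtgt
        ≤ ∫ x, |f' x - y x| ∂μtgt + ∫ x, |f x - f' x| ∂μtgt := by
      rw [← integral_add (hint f' hf' μtgt) (hint2 f hf f' hf' μtgt)]
      refine integral_mono (hint f hf μtgt)
        ((hint f' hf' μtgt).add (hint2 f hf f' hf' μtgt)) (fun x => ?_)
      have : f x - y x = (f' x - y x) + (f x - f' x) := by ring
      rw [this]
      exact abs_add_le _ _
    have tri2 : ∫ x, |f x - f' x| ∂μsrc
        ≤ ∫ x, |f x - y x| ∂μsrc + ∫ x, |f' x - y x| ∂μsrc := by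
      rw [← integral_add (hint f hf μsrc) (hint f' hf' μsrc)]
      refine integral_mono (hint2 f hf f' hf' μsrc)
        ((hint f hf μsrc).add (hint f' hf' μsrc)) (fun x => ?_)
      have : f x - f' x = (f x - y x) - (f' x - y x) := by ring
      rw [this]
      exact abs_sub _ _
    have hkey := key f' hf'
    have habs : ∫ x, |f x - f' x| ∂μtgt
        ≤ ∫ x, |f x - f' x| ∂μsrc + S * D := by
      have := abs_le.mp hkey
      linarith [this.1, this.2]
    linarith
  have hfinal : ∫ x, |f x - y x| ∂μtgt - (∫ x, |f x - y x| ∂μsrc + S * D)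
      ≤ ⨅ f' : 𝒳, (∫ x, |f'.1 x - y x| ∂μtgt + ∫ x, |f'.1 x - y x| ∂μsrc) := by
    haveI : Nonempty 𝒳 := ⟨⟨f, hf⟩⟩
    exact le_ciInf main
  linarith
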